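/- For each j ∈ {0,...,n-1}, the sum of k/(2^n-1) over all k ∈ {0,...,2^n-1} whose n-bit binary representation has exactly j zeros equals the binomial coefficient C(n-1, j). -/

import Mathlib

/-- number of ones in the binary representation of `k` -/
def ones (k : ℕ) : ℕ := (Nat.digits 2 k).sum

/-!
Induct on `n`, splitting `range (2 ^ (n + 1))` by its top bit: the numbers `2 ^ n + k`
with `k < 2 ^ n` carry one more `1` than `k`. Hence the sum `S n m` of the `k < 2 ^ n` with
`m` ones satisfies `S (n + 1) (m + 1) = S n (m + 1) + 2 ^ n * choose n m + S n m`, and Pascal's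
rule turns this into `S (n + 1) (m + 1) = choose n m * (2 ^ (n + 1) - 1)`. The `n - ones k = j`
zeros are `ones k = n - j` ones, and `choose (n - 1) (n - j - 1) = choose (n - 1) j`.
-/

open Finset

lemma ones_eq_mod_two_add_ones_div_two (k : ℕ) : ones k = k % 2 + ones (k / 2) := by
  rcases Nat.eq_zero_or_pos k with rfl | hk
  · simp [ones]
  · simp [ones, Nat.digits_def' (by norm_num : 1 < 2) hk]

lemma ones_eq_zero_iff {k : ℕ} : ones k = 0 ↔ k = 0 := by
  induction k using Nat.strong_induction_on with
  | _ k ih =>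
    rcases Nat.eq_zero_or_pos k with rfl | hk
    · simp [ones]
    · rw [ones_eq_mod_two_add_ones_div_two, Nat.add_eq_zero_iff, ih (k / 2) (by omega)]
      omega

lemma ones_le {n k : ℕ} (hk : k < 2 ^ n) : ones k ≤ n := by
  induction n generalizing k with
  | zero => simp_all [ones]
  | succ n ih =>
    have := ih (k := k / 2) (by rw [pow_succ] at hk; omega)
    rw [ones_eq_mod_two_add_ones_div_two]
    omega

lemma ones_two_pow_add {n k : ℕ} (hk : k < 2 ^ n) : ones (2 ^ n + k) = ones k + 1 := by
  induction n generalizing k with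
  | zero => simp_all [ones]
  | succ n ih =>
    have hdiv : (2 ^ (n + 1) + k) / 2 = 2 ^ n + k / 2 := by rw [pow_succ]; omega
    rw [ones_eq_mod_two_add_ones_div_two (2 ^ (n + 1) + k), ones_eq_mod_two_add_ones_div_two k,
      hdiv, ih (by rw [pow_succ] at hk; omega)]
    omega

lemma filter_ones_eq_zero (n : ℕ) : {k ∈ range (2 ^ n) | ones k = 0} = {0} := by
  ext k
  simp [ones_eq_zero_iff]

lemma sum_filter_ones_succ_range_two_pow_succ {M : Type*} [AddCommMonoid M] (f : ℕ → M)
    (n m : ℕ) :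
    ∑ k ∈ range (2 ^ (n + 1)) with ones k = m + 1, f k =
      ∑ k ∈ range (2 ^ n) with ones k = m + 1, f k +
        ∑ k ∈ range (2 ^ n) with ones k = m, f (2 ^ n + k) := by
  rw [sum_filter, pow_succ, mul_two, sum_range_add, sum_filter, sum_filter]
  congr 1
  refine sum_congr rfl fun k hk => ?_
  simp [ones_two_pow_add (mem_range.mp hk)]

lemma card_filter_ones_eq (n m : ℕ) : #{k ∈ range (2 ^ n) | ones k = m} = n.choose m := by
  induction n generalizing m with
  | zero => rcases m with _ | m <;> simp [ones, filter_singleton]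
  | succ n ih =>
    rcases m with _ | m
    · simp [filter_ones_eq_zero]
    · rw [card_eq_sum_ones, sum_filter_ones_succ_range_two_pow_succ, ← card_eq_sum_ones,
        ← card_eq_sum_ones, ih, ih, Nat.choose_succ_succ', add_comm]

lemma sum_filter_ones_eq_succ (n m : ℕ) :
    ∑ k ∈ range (2 ^ (n + 1)) with ones k = m + 1, k = n.choose m * (2 ^ (n + 1) - 1) := by
  induction n generalizing m with
  | zero => rcases m with _ | m <;> simp [sum_filter, sum_range_succ, ones]
  | succ n ih =>
    rw [sum_filter_ones_succ_range_two_pow_succ, sum_add_distrib, sum_const, smul_eq_mul,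
      card_filter_ones_eq, ih]
    have hpow : 1 ≤ 2 ^ (n + 1) := Nat.one_le_two_pow
    rcases m with _ | m
    · simp only [filter_ones_eq_zero, sum_singleton, Nat.choose_zero_right]
      rw [pow_succ 2 (n + 1)]
      omega
    · rw [ih, Nat.choose_succ_succ' n m]
      zify [hpow, Nat.one_le_two_pow (n := n + 2)]
      push_cast [pow_succ]
      ring

theorem j_zeros_strings_sum_general (n j : ℕ) (hj : j < n) :
    ∑ k ∈ (Finset.range (2 ^ n)).filter (fun k => n - ones k = j),
      ((k : ℝ) / (2 ^ n - 1)) = ((n - 1).choose j : ℝ) := by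
  obtain ⟨n, rfl⟩ : ∃ n', n = n' + 1 := ⟨n - 1, by omega⟩
  have hfilter : {k ∈ range (2 ^ (n + 1)) | n + 1 - ones k = j} =
      {k ∈ range (2 ^ (n + 1)) | ones k = (n - j) + 1} :=
    filter_congr fun k hk => by have := ones_le (mem_range.mp hk); omega
  have hden : (2 : ℝ) ^ (n + 1) - 1 ≠ 0 := by
    have : (2 : ℝ) ≤ 2 ^ (n + 1) := le_self_pow₀ one_le_two n.succ_ne_zero
    linarith
  rw [hfilter, ← sum_div, ← Nat.cast_sum, sum_filter_ones_eq_succ, Nat.choose_symm (by omega),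
    Nat.add_sub_cancel, div_eq_iff hden]
  push_cast [Nat.one_le_two_pow]
  ring

theorem j_zeros_strings_sum (n j : ℕ) (hn : 1 ≤ n) (hj : j < n) :
    ∑ k ∈ (Finset.range (2 ^ n)).filter (fun k => n - ones k = j),
      ((k : ℝ) / (2 ^ n - 1)) = ((n - 1).choose j : ℝ) :=
  j_zeros_strings_sum_general n j hj
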